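/- arXiv:math/0210132 — 2 statements merged into one kernel-verified Lean document; each statement's English description precedes it below -/
import Mathlib

section
/- Let K be a complete discretely valued field of characteristic 0 with residue field k of characteristic p > 0, and let h(X) ∈ K[X] be a monic polynomial of degree p with h(0) = 0. If every root of the derivative h'(X) (in an algebraic closure) is mapped by h into the valuation ring R (i.e., the finite branch locus of the cover induced by h is contained in R), then h(X) has coefficients in R and its reduction modulo the maximal ideal equals X^p. -/
/-!
Write `H` for the image of `h` over `L` and suppose some root of `H` has valuation `≤ 0`; let `z`
be a root of minimal valuation `λ`. Since `H z = 0`, some coefficient `aₖ` with `k < p` satisfies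
`v aₖ ≤ (p - k) λ`, and `k ≠ 0` because `a₀ = 0 ≠ z`. The coefficient of `X ^ (k - 1)` in `H'` is
`k aₖ`, and `v k = 0` as `0 < k < p`. On the other hand `H' = p ∏ (X - y)` over the critical
points `y`, so if `μ` is the least valuation of a critical point, that coefficient has valuation
at least `v p + (p - k) μ`. Hence `(p - k) λ ≥ v p + (p - k) μ`, i.e. `μ < λ`. For a critical
point `y` with `v y = μ` this gives `v (y - z) = μ` for every root `z`, so `v (H y) = p μ < 0`,
contradicting the hypothesis on the branch locus. So all roots of `H` have positive valuation,
and the coefficients of `H` below `X ^ p` are, up to sign, elementary symmetric functions of them.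
-/

open Polynomial

theorem WithTop.nsmul_ne_top {α : Type*} [AddMonoid α] {a : WithTop α} (ha : a ≠ ⊤) (n : ℕ) :
    n • a ≠ ⊤ := by
  lift a to α using ha
  exact WithTop.coe_ne_top (a := n • a)

namespace AddValuation

section Ring

variable {R Γ₀ : Type*} [Ring R] [LinearOrderedAddCommMonoidWithTop Γ₀] (v : AddValuation R Γ₀)

theorem natCast_nonneg (n : ℕ) : 0 ≤ v n := by
  induction n with
  | zero => simp
  | succ n ih => exact Nat.cast_succ (R := R) n ▸ v.map_le_add ih v.map_one.ge

theorem natCast_eq_zero_of_coprime {p n : ℕ} (hvp : 0 < v p) (hpn : p.Coprime n) : v n = 0 := by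
  obtain rfl | rfl | hp : p = 0 ∨ p = 1 ∨ 1 < p := by omega
  · rw [Nat.coprime_zero_left] at hpn
    simp [hpn]
  · simp at hvp
  obtain ⟨m, -, hm⟩ := Nat.exists_mul_mod_eq_one_of_coprime hpn.symm hp
  have hnm : ((n * m : ℕ) : R) = p * (n * m / p : ℕ) + 1 := by
    rw [← Nat.cast_mul, ← Nat.cast_add_one, ← hm, Nat.div_add_mod]
  have hvp_mul : v 1 < v (p * (n * m / p : ℕ) : R) := by
    rw [map_one, map_mul]
    exact hvp.trans_le (le_add_of_nonneg_right (v.natCast_nonneg _))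
  have hvnm : v n + v m = 0 := by
    rw [← map_mul, ← Nat.cast_mul, hnm, map_add_eq_of_lt_right _ hvp_mul, map_one]
  exact ((add_eq_zero_iff_of_nonneg (v.natCast_nonneg n) (v.natCast_nonneg m)).mp hvnm).1

end Ring

section CommRing

variable {R : Type*} [CommRing R]

section LinearOrderedAddCommMonoidWithTop

variable {Γ₀ : Type*} [LinearOrderedAddCommMonoidWithTop Γ₀] {v : AddValuation R Γ₀}

theorem nsmul_le_prod {c : Γ₀} {s : Multiset R} (hs : ∀ x ∈ s, c ≤ v x) :
    Multiset.card s • c ≤ v s.prod := by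
  induction s using Multiset.induction_on with
  | empty => simp
  | cons a s ih =>
    rw [Multiset.card_cons, succ_nsmul', Multiset.prod_cons, map_mul]
    exact add_le_add (hs a (s.mem_cons_self a))
      (ih fun x hx => hs x (Multiset.mem_cons_of_mem hx))

theorem nsmul_le_esymm {c : Γ₀} {s : Multiset R} (hs : ∀ x ∈ s, c ≤ v x) (k : ℕ) :
    k • c ≤ v (s.esymm k) := by
  refine Multiset.sum_induction (k • c ≤ v ·) _ (fun _ _ => v.map_le_add) (by simp) ?_
  simp only [Multiset.mem_map, Multiset.mem_powersetCard]
  rintro _ ⟨t, ⟨hts, rfl⟩, rfl⟩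
  exact nsmul_le_prod fun x hx => hs x (Multiset.mem_of_le hts hx)

theorem prod_map_sub_eq_card_nsmul {s : Multiset R} {y : R} (hy : ∀ z ∈ s, v y < v z) :
    v (s.map (y - ·)).prod = Multiset.card s • v y := by
  induction s using Multiset.induction_on with
  | empty => simp
  | cons a s ih =>
    rw [Multiset.map_cons, Multiset.prod_cons, map_mul,
      map_sub_eq_of_lt_left _ (hy a (s.mem_cons_self a)),
      ih fun z hz => hy z (Multiset.mem_cons_of_mem hz), Multiset.card_cons, succ_nsmul']

theorem coeff_prod_X_sub_C (s : Multiset R) {k : ℕ} (hk : k ≤ Multiset.card s) :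
    v ((s.map fun z => X - C z).prod.coeff k) = v (s.esymm (Multiset.card s - k)) := by
  rw [Multiset.prod_X_sub_C_coeff s hk]
  rcases neg_one_pow_eq_or R (Multiset.card s - k) with h | h <;> simp [h]

end LinearOrderedAddCommMonoidWithTop

variable {Γ : Type*} [AddCommGroup Γ] [LinearOrder Γ] [IsOrderedAddMonoid Γ]
  {v : AddValuation R (WithTop Γ)}

theorem esymm_pos {s : Multiset R} (hs : ∀ x ∈ s, 0 < v x) {k : ℕ} (hk : k ≠ 0) :
    0 < v (s.esymm k) := by
  refine Multiset.sum_induction (0 < v ·) _ (fun _ _ => v.map_lt_add) (by simp) ?_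
  simp only [Multiset.mem_map, Multiset.mem_powersetCard]
  rintro _ ⟨t, ⟨hts, htk⟩, rfl⟩
  obtain ⟨a, ha⟩ := Multiset.card_pos_iff_exists_mem.mp (htk ▸ Nat.pos_of_ne_zero hk)
  obtain ⟨t, rfl⟩ := Multiset.exists_cons_of_mem ha
  have hst : ∀ x ∈ a ::ₘ t, 0 < v x := fun x hx => hs x (Multiset.mem_of_le hts hx)
  rw [Multiset.prod_cons, map_mul]
  refine (hst a (t.mem_cons_self a)).trans_le (le_add_of_nonneg_right ?_)
  simpa using nsmul_le_prod fun x hx => (hst x (Multiset.mem_cons_of_mem hx)).le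

theorem exists_coeff_le_nsmul_of_isRoot {P : R[X]} (hP : P.Monic) {z : R} (hz : P.IsRoot z) :
    ∃ k < P.natDegree, v (P.coeff k) ≤ (P.natDegree - k) • v z := by
  by_contra! hlt
  set n := P.natDegree
  have hne : n • v z ≠ ⊤ := by
    rcases eq_or_ne n 0 with hn | hn
    · simp [hn]
    · simpa using (hlt 0 (Nat.pos_of_ne_zero hn)).ne_top
  have hsum : n • v z < v (∑ k ∈ Finset.range n, P.coeff k * z ^ k) := by
    refine v.map_lt_sum hne fun k hk => ?_
    have hk := Finset.mem_range.mp hk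
    have hsplit : n • v z = (n - k) • v z + k • v z := by
      rw [← add_nsmul, Nat.sub_add_cancel hk.le]
    rw [map_mul, map_pow, hsplit]
    exact WithTop.add_lt_add_right (WithTop.add_ne_top.mp (hsplit ▸ hne)).2 (hlt k hk)
  have hzn : z ^ n = -∑ k ∈ Finset.range n, P.coeff k * z ^ k := by
    rw [eq_neg_iff_add_eq_zero, add_comm, ← hz.eq_zero, eval_eq_sum_range, Finset.sum_range_succ,
      hP.coeff_natDegree, one_mul]
  have hv := congrArg v hzn
  rw [map_pow, map_neg] at hv
  exact (hv ▸ hsum).false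

end CommRing

section IsAlgClosed

variable {L : Type*} [Field L] [IsAlgClosed L]

section LinearOrderedAddCommMonoidWithTop

variable {Γ₀ : Type*} [LinearOrderedAddCommMonoidWithTop Γ₀] {v : AddValuation L Γ₀}

theorem leadingCoeff_add_nsmul_le_coeff {P : L[X]} {c : Γ₀} (hc : ∀ y ∈ P.roots, c ≤ v y)
    {k : ℕ} (hk : k ≤ P.natDegree) :
    v P.leadingCoeff + (P.natDegree - k) • c ≤ v (P.coeff k) := by
  have hcard : Multiset.card P.roots = P.natDegree := IsAlgClosed.card_roots_eq_natDegree
  conv_rhs => rw [← C_leadingCoeff_mul_prod_multiset_X_sub_C hcard]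
  rw [coeff_C_mul, map_mul, coeff_prod_X_sub_C _ (hcard ▸ hk), hcard]
  gcongr
  exact nsmul_le_esymm hc _

theorem eval_eq_natDegree_nsmul {P : L[X]} (hP : P.Monic) {y : L}
    (hy : ∀ z ∈ P.roots, v y < v z) : v (P.eval y) = P.natDegree • v y := by
  have hcard : Multiset.card P.roots = P.natDegree := IsAlgClosed.card_roots_eq_natDegree
  rw [← prod_multiset_X_sub_C_of_monic_of_roots_card_eq hP hcard, eval_multiset_prod,
    Multiset.map_map, natDegree_multiset_prod_X_sub_C_eq_card]
  simpa [Function.comp_def] using prod_map_sub_eq_card_nsmul hy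

end LinearOrderedAddCommMonoidWithTop

variable {Γ : Type*} [AddCommGroup Γ] [LinearOrder Γ] [IsOrderedAddMonoid Γ]
  {v : AddValuation L (WithTop Γ)}

theorem coeff_pos_of_roots_pos {P : L[X]} (hP : P.Monic) (hpos : ∀ z ∈ P.roots, 0 < v z)
    {k : ℕ} (hk : k < P.natDegree) : 0 < v (P.coeff k) := by
  have hcard : Multiset.card P.roots = P.natDegree := IsAlgClosed.card_roots_eq_natDegree
  rw [← prod_multiset_X_sub_C_of_monic_of_roots_card_eq hP hcard,
    coeff_prod_X_sub_C _ (hcard ▸ hk.le)]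
  exact esymm_pos hpos (by omega)

variable [CharZero L]

theorem exists_isRoot_derivative_lt {p : ℕ} (hp : p.Prime) (hvp : 0 < v (p : L)) {H : L[X]}
    (hH : H.Monic) (hdeg : H.natDegree = p) (h0 : H.coeff 0 = 0) {z : L} (hz : H.IsRoot z)
    (hz0 : z ≠ 0) : ∃ y, H.derivative.IsRoot y ∧ v y < v z := by
  classical
  obtain ⟨k, hkp, hk⟩ := exists_coeff_le_nsmul_of_isRoot (v := v) hH hz
  rw [hdeg] at hkp hk
  have hvz : v z ≠ ⊤ := v.ne_top_iff.mpr hz0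
  obtain ⟨j, rfl⟩ : ∃ j, k = j + 1 := by
    refine Nat.exists_eq_succ_of_ne_zero fun hk0 => ?_
    rw [hk0, h0, map_zero, top_le_iff] at hk
    exact WithTop.nsmul_ne_top hvz _ hk
  have hvk : v ((j + 1 : ℕ) : L) = 0 := v.natCast_eq_zero_of_coprime hvp
    (hp.coprime_iff_not_dvd.mpr (Nat.not_dvd_of_pos_of_lt j.succ_pos hkp))
  have hcoeff : v (H.derivative.coeff j) = v (H.coeff (j + 1)) := by
    rw [coeff_derivative, map_mul, ← Nat.cast_add_one, hvk, add_zero]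
  have hdeg' : H.derivative.natDegree = p - 1 := by rw [natDegree_derivative, hdeg]
  have hroots : H.derivative.roots.toFinset.Nonempty := by
    rw [Multiset.toFinset_nonempty, ← Multiset.card_pos, IsAlgClosed.card_roots_eq_natDegree,
      hdeg']
    omega
  obtain ⟨y, hy, hmin⟩ := H.derivative.roots.toFinset.exists_min_image v hroots
  refine ⟨y, (mem_roots'.mp (Multiset.mem_toFinset.mp hy)).2, ?_⟩
  by_contra! hzy
  have hbound := leadingCoeff_add_nsmul_le_coeff
    (fun x hx => hmin x (Multiset.mem_toFinset.mpr hx)) (show j ≤ H.derivative.natDegree by omega)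
  rw [hcoeff, leadingCoeff_derivative, hH.leadingCoeff, one_mul, hdeg, hdeg',
    show p - 1 - j = p - (j + 1) by omega] at hbound
  have hcontra : v p + (p - (j + 1)) • v z ≤ (p - (j + 1)) • v z :=
    calc v p + (p - (j + 1)) • v z ≤ v p + (p - (j + 1)) • v y := by gcongr
      _ ≤ (p - (j + 1)) • v z := hbound.trans hk
  exact (WithTop.add_lt_add_right (WithTop.nsmul_ne_top hvz _) hvp).not_ge (by simpa using hcontra)

theorem roots_pos_of_critical_values_nonneg {p : ℕ} (hp : p.Prime) (hvp : 0 < v (p : L))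
    {H : L[X]} (hH : H.Monic) (hdeg : H.natDegree = p) (h0 : H.coeff 0 = 0)
    (hcrit : ∀ y, H.derivative.IsRoot y → 0 ≤ v (H.eval y)) : ∀ z ∈ H.roots, 0 < v z := by
  classical
  by_contra! ⟨z₀, hz₀, hvz₀⟩
  obtain ⟨z, hz, hmin⟩ :=
    H.roots.toFinset.exists_min_image v ⟨z₀, Multiset.mem_toFinset.mpr hz₀⟩
  have hvz : v z ≤ 0 := (hmin z₀ (Multiset.mem_toFinset.mpr hz₀)).trans hvz₀
  have hz0 : z ≠ 0 := by
    rintro rfl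
    simp at hvz
  obtain ⟨y, hy, hyz⟩ := exists_isRoot_derivative_lt hp hvp hH hdeg h0
    (mem_roots'.mp (Multiset.mem_toFinset.mp hz)).2 hz0
  have heval : v (H.eval y) = p • v y := hdeg ▸ eval_eq_natDegree_nsmul hH fun x hx =>
    hyz.trans_le (hmin x (Multiset.mem_toFinset.mpr hx))
  exact (hcrit y hy).not_gt (heval ▸ nsmul_neg (hyz.trans_le hvz) hp.ne_zero)

end IsAlgClosed

end AddValuation

theorem specialization_stmt0_general
    (p : ℕ) (hp : p.Prime)
    (K L : Type*) [Field K] [CharZero K] [Field L] [IsAlgClosed L] [Algebra K L]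
    (v : L → WithTop ℚ)
    (hv0 : ∀ x : L, v x = ⊤ ↔ x = 0)
    (hvmul : ∀ x y : L, v (x * y) = v x + v y)
    (hvadd : ∀ x y : L, min (v x) (v y) ≤ v (x + y))
    (hvp : v (p : L) = 1)
    (h : K[X]) (hmonic : h.Monic) (hdeg : h.natDegree = p) (h0 : h.coeff 0 = 0)
    (hbranch : ∀ y : L, (derivative (h.map (algebraMap K L))).eval y = 0 →
      0 ≤ v ((h.map (algebraMap K L)).eval y)) :
    (∀ i, 0 ≤ v (algebraMap K L (h.coeff i))) ∧
      (∀ i < p, 0 < v (algebraMap K L (h.coeff i))) := by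
  have : CharZero L := charZero_of_injective_algebraMap (algebraMap K L).injective
  have hv1 : v 1 = 0 := by
    obtain ⟨q, hq⟩ := WithTop.ne_top_iff_exists.mp ((hv0 1).not.mpr one_ne_zero)
    have h11 := hvmul 1 1
    rw [mul_one, ← hq, ← WithTop.coe_add, WithTop.coe_inj] at h11
    rw [← hq, show q = 0 by linarith, WithTop.coe_zero]
  let w : AddValuation L (WithTop ℚ) := .of v ((hv0 0).mpr rfl) hv1 hvadd hvmul
  have hroots : ∀ z ∈ (h.map (algebraMap K L)).roots, 0 < w z :=
    AddValuation.roots_pos_of_critical_values_nonneg hp (by simp [w, hvp]) (hmonic.map _)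
      (by rw [hmonic.natDegree_map, hdeg]) (by simp [h0]) hbranch
  have hcoeff : ∀ i < p, 0 < v (algebraMap K L (h.coeff i)) := fun i hi => by
    simpa [w] using AddValuation.coeff_pos_of_roots_pos (hmonic.map _) hroots
      (by rwa [hmonic.natDegree_map, hdeg])
  refine ⟨fun i => ?_, hcoeff⟩
  rcases lt_trichotomy i p with hi | rfl | hi
  · exact (hcoeff i hi).le
  · simp [← hdeg, hmonic.coeff_natDegree, hv1]
  · simp [coeff_eq_zero_of_natDegree_lt (hdeg ▸ hi), (hv0 0).mpr rfl]

/-- **Lemma 3.1.** Let `K` be a complete discretely valued field of characteristic `0`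
with residue characteristic `p > 0` (encoded by a rank-one valuation `v`, normalized by
`v p = 1`, on an algebraically closed extension `L` of `K`, discrete on `K`), and let
`h ∈ K[X]` be monic of degree `p` with `h 0 = 0`.  If every root of `h'` (in `L`) is
mapped by `h` into the valuation ring, then `h` has coefficients in the valuation ring
and its reduction modulo the maximal ideal is `X ^ p`. -/
theorem specialization_stmt0
    (p : ℕ) (hp : p.Prime)
    (K L : Type*) [Field K] [CharZero K] [Field L] [IsAlgClosed L] [Algebra K L]
    (v : L → WithTop ℚ)
    (hv0 : ∀ x : L, v x = ⊤ ↔ x = 0)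
    (hvmul : ∀ x y : L, v (x * y) = v x + v y)
    (hvadd : ∀ x y : L, min (v x) (v y) ≤ v (x + y))
    (hvp : v (p : L) = 1)
    (e : ℕ) (he : 0 < e)
    (hdisc : ∀ x : K, x ≠ 0 → ∃ n : ℤ, v (algebraMap K L x) = ((n : ℚ) / (e : ℚ) : ℚ))
    (h : K[X]) (hmonic : h.Monic) (hdeg : h.natDegree = p) (h0 : h.coeff 0 = 0)
    (hbranch : ∀ y : L, (derivative (h.map (algebraMap K L))).eval y = 0 →
      0 ≤ v ((h.map (algebraMap K L)).eval y)) :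
    (∀ i, 0 ≤ v (algebraMap K L (h.coeff i))) ∧
      (∀ i < p, 0 < v (algebraMap K L (h.coeff i))) :=
  specialization_stmt0_general p hp K L v hv0 hvmul hvadd hvp h hmonic hdeg h0 hbranch
end

section
/- With R a complete DVR of unequal characteristics (0,p), let β(X) ∈ R[X] be monic of degree p with β(0)=0 and β ≡ X^p modulo the maximal ideal, and γ(X) = X^p β(1/X). Then the R-algebra R[X_∞][Y]/(Y^p − γ(Y)·X_∞) — i.e., the quotient of R[X_∞, Y] by (Y^p − γ(Y) X_∞) — is isomorphic to the localization R[Y, γ(Y)^{-1}], and it is a finite module over R[X_∞] via X_∞ ↦ Y^p/γ(Y). -/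
/-!
In `A = R[X∞][Y] / (Y ^ p - γ(Y) X∞)` the element `γ(Y)` divides `Y ^ p`, while `γ(Y) ≡ 1 mod Y`
because `γ(0) = 1`. Hence `γ(Y)` divides `(γ(Y) - 1) ^ p ≡ (-1) ^ p mod γ(Y)`, so it is a unit, and
`X∞ = Y ^ p / γ(Y)` is redundant: `A ≅ R[Y][γ(Y)⁻¹]`. Since `deg γ < p` the relation is monic in
`Y`, so `A` is free of rank `p` over `R[X∞]`.
-/

open Polynomial

theorem Polynomial.natDegree_reverse_lt {R : Type*} [Semiring R] {f : R[X]} (hf : f ≠ 0)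
    (h0 : f.coeff 0 = 0) : f.reverse.natDegree < f.natDegree := by
  have hpos : f.natTrailingDegree ≠ 0 := by simp [hf, h0]
  have := f.natTrailingDegree_le_natDegree
  rw [reverse_natDegree]
  omega

theorem isUnit_of_dvd_pow_of_dvd_sub_one {A : Type*} [CommRing A] {g y : A} (n : ℕ)
    (hy : y ∣ g - 1) (hg : g ∣ y ^ n) : IsUnit g := by
  have h₁ : g ∣ (g - 1) ^ n := hg.trans (pow_dvd_pow_of_dvd hy n)
  have h₂ : g ∣ (g - 1) ^ n - (-1) ^ n := by simpa using sub_dvd_pow_sub_pow (g - 1) (-1) n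
  have h₃ := dvd_sub h₁ h₂
  rw [sub_sub_cancel] at h₃
  exact isUnit_of_dvd_unit h₃ (isUnit_neg_one.pow n)

section ChartAtInfinity

variable {R : Type*} [CommRing R] (p : ℕ) (γ : R[X])

/-- `Y ^ p - γ(Y) X∞ ∈ R[X∞][Y]`: the outer variable is `Y`, the inner one `X∞`. -/
noncomputable def chartRelation : R[X][X] := X ^ p - γ.map C * C X

theorem eval₂_chartRelation {S : Type*} [CommRing S] [Algebra R S] (f : R[X] →ₐ[R] S) (y : S) :
    (chartRelation p γ).eval₂ (f : R[X] →+* S) y = y ^ p - aeval y γ * f X := by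
  rw [chartRelation, eval₂_sub, eval₂_mul, eval₂_map, ← algebraMap_eq, AlgHom.comp_algebraMap,
    eval₂_X_pow, eval₂_C, aeval_def, RingHom.coe_coe]

theorem chartRelation_monic {p : ℕ} {γ : R[X]} (h : γ.natDegree < p) :
    (chartRelation p γ).Monic := by
  apply monic_X_pow_sub
  calc (γ.map C * C X).degree ≤ (γ.map C).degree + (C X : R[X][X]).degree := degree_mul_le _ _
    _ ≤ γ.degree + 0 := add_le_add degree_map_le degree_C_le
    _ < p := by rw [add_zero]; exact degree_le_natDegree.trans_lt (mod_cast h)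

theorem aeval_root_chartRelation (s : R[X]) :
    aeval (AdjoinRoot.root (chartRelation p γ)) s = AdjoinRoot.mk _ (s.map C) := by
  rw [← AdjoinRoot.aeval_eq, ← algebraMap_eq, aeval_map_algebraMap]

theorem root_chartRelation_pow :
    AdjoinRoot.root (chartRelation p γ) ^ p =
      aeval (AdjoinRoot.root (chartRelation p γ)) γ * AdjoinRoot.of _ X := by
  have h : AdjoinRoot.mk (chartRelation p γ) (X ^ p - γ.map C * C X) = 0 := AdjoinRoot.mk_self
  rw [map_sub, map_mul, sub_eq_zero, map_pow, AdjoinRoot.mk_X, AdjoinRoot.mk_C] at h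
  rw [h, aeval_root_chartRelation]

noncomputable def chartToLocalization :
    AdjoinRoot (chartRelation p γ) →ₐ[R] Localization.Away γ :=
  AdjoinRoot.liftAlgHom _
      (aeval (algebraMap R[X] _ X ^ p * IsLocalization.Away.invSelf γ))
      (algebraMap R[X] (Localization.Away γ) X) (by
        rw [eval₂_chartRelation, aeval_algebraMap_apply, aeval_X_left_apply, aeval_X, ← mul_assoc,
          mul_right_comm, IsLocalization.Away.mul_invSelf, one_mul, sub_self])

variable {γ}

theorem isUnit_aeval_root_chartRelation (hγ : γ.coeff 0 = 1) :
    IsUnit (aeval (AdjoinRoot.root (chartRelation p γ)) γ) := by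
  refine isUnit_of_dvd_pow_of_dvd_sub_one p ?_ ⟨_, root_chartRelation_pow p γ⟩
  have hX : X ∣ γ - 1 := X_dvd_iff.mpr (by simp [hγ])
  simpa using map_dvd (aeval (AdjoinRoot.root (chartRelation p γ))) hX

noncomputable def localizationToChart (hγ : γ.coeff 0 = 1) :
    Localization.Away γ →ₐ[R] AdjoinRoot (chartRelation p γ) :=
  IsLocalization.liftAlgHom (M := Submonoid.powers γ)
    (f := aeval (AdjoinRoot.root (chartRelation p γ)))
    (by rintro ⟨_, n, rfl⟩; simpa using (isUnit_aeval_root_chartRelation p hγ).pow n)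

theorem localizationToChart_algebraMap (hγ : γ.coeff 0 = 1) (s : R[X]) :
    localizationToChart p hγ (algebraMap R[X] _ s) =
      aeval (AdjoinRoot.root (chartRelation p γ)) s := by
  simp [localizationToChart]

noncomputable def chartEquivLocalization (hγ : γ.coeff 0 = 1) :
    AdjoinRoot (chartRelation p γ) ≃ₐ[R] Localization.Away γ := by
  refine AlgEquiv.ofAlgHom (chartToLocalization p γ) (localizationToChart p hγ) ?_ ?_
  · refine IsLocalization.algHom_ext (Submonoid.powers γ) (Polynomial.algHom_ext ?_)
    change chartToLocalization p γ (localizationToChart p hγ (algebraMap R[X] _ X)) =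
      algebraMap R[X] _ X
    rw [localizationToChart_algebraMap, aeval_X]
    exact AdjoinRoot.liftAlgHom_root ..
  · have hinv := congrArg (localizationToChart p hγ)
      (IsLocalization.Away.mul_invSelf (S := Localization.Away γ) γ)
    rw [map_mul, map_one, localizationToChart_algebraMap] at hinv
    refine AdjoinRoot.algHom_ext' (Polynomial.algHom_ext ?_) ?_
    · simp only [chartToLocalization, AlgHom.coe_comp, AdjoinRoot.coe_ofAlgHom,
        Function.comp_apply, AdjoinRoot.liftAlgHom_of, aeval_X, map_mul, map_pow,
        localizationToChart_algebraMap, AlgHom.id_comp]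
      rw [root_chartRelation_pow, mul_right_comm, hinv, one_mul]
    · simp [localizationToChart_algebraMap, chartToLocalization]

end ChartAtInfinity

theorem specialization_stmt3_general
    (p : ℕ) (hp : p.Prime)
    (R : Type*) [CommRing R]
    (β : R[X]) (hmonic : β.Monic) (hdeg : β.natDegree = p) (hβ0 : β.coeff 0 = 0)
    (γ : R[X]) (hγ : γ = β.reverse)
    (q : Polynomial (Polynomial R))
    (hq : q = (X : Polynomial (Polynomial R)) ^ p -
      γ.map (C : R →+* Polynomial R) * C (X : Polynomial R)) :
    Module.Finite (Polynomial R)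
        ((Polynomial (Polynomial R)) ⧸ Ideal.span {q}) ∧
      Nonempty (((Polynomial (Polynomial R)) ⧸ Ideal.span {q}) ≃ₐ[R]
        Localization.Away γ) := by
  subst hγ hq
  have hβ : β ≠ 0 := ne_zero_of_natDegree_gt (hdeg ▸ hp.pos)
  have hγ0 : β.reverse.coeff 0 = 1 := by rw [coeff_zero_reverse, hmonic.leadingCoeff]
  have hγdeg : β.reverse.natDegree < p := hdeg ▸ natDegree_reverse_lt hβ hβ0
  exact ⟨(chartRelation_monic hγdeg).finite_adjoinRoot, ⟨chartEquivLocalization p hγ0⟩⟩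

/-- With `R` a complete DVR of unequal characteristics `(0, p)`, let `β ∈ R[X]` be monic
of degree `p` with `β 0 = 0` and `β ≡ X ^ p` modulo the maximal ideal, and
`γ X = X ^ p * β (1 / X)` (the reverse of `β`).  Then the `R`-algebra
`R[X∞][Y] / (Y ^ p - γ Y * X∞)` is isomorphic to the localization `R[Y][γ(Y)⁻¹]`,
and it is a finite module over `R[X∞]` (via `X∞ ↦ Y ^ p / γ Y`). -/
theorem specialization_stmt3
    (p : ℕ) (hp : p.Prime)
    (R : Type*) [CommRing R] [IsDomain R] [IsDiscreteValuationRing R] [CharZero R]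
    [IsAdicComplete (IsLocalRing.maximalIdeal R) R]
    (hpR : (p : R) ∈ IsLocalRing.maximalIdeal R)
    (β : R[X]) (hmonic : β.Monic) (hdeg : β.natDegree = p) (hβ0 : β.coeff 0 = 0)
    (hred : ∀ i < p, β.coeff i ∈ IsLocalRing.maximalIdeal R)
    (γ : R[X]) (hγ : γ = β.reverse)
    (q : Polynomial (Polynomial R))
    (hq : q = (X : Polynomial (Polynomial R)) ^ p -
      γ.map (C : R →+* Polynomial R) * C (X : Polynomial R)) :
    Module.Finite (Polynomial R)
        ((Polynomial (Polynomial R)) ⧸ Ideal.span {q}) ∧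
      Nonempty (((Polynomial (Polynomial R)) ⧸ Ideal.span {q}) ≃ₐ[R]
        Localization.Away γ) :=
  specialization_stmt3_general p hp R β hmonic hdeg hβ0 γ hγ q hq
end
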